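/- arXiv:1904.00757 — 4 statements merged into one kernel-verified Lean document; each statement's English description precedes it below -/
import Mathlib

section
/- Let G = {g1, g2, g3, g4} be the Klein four-group of 3×3 matrices (g1 = I, g_m diagonal ±1 rotations by 180° about the axes), let R_i, R_j, R_k ∈ SO(3), and let τ_ij, τ_jk, τ_ki ∈ S_4. Define R_{ij}^m = R_i^T g_{τ_ij(m)} R_j, R_{jk}^l = R_j^T g_{τ_jk(l)} R_k, R_{ki}^r = R_k^T g_{τ_ki(r)} R_i. Then exactly 16 out of the 64 triplets (m,l,r) ∈ {1,2,3,4}³ satisfy R_{ij}^m R_{jk}^l R_{ki}^r = I. -/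
open Matrix

/-- The Klein four-group matrices: identity and rotations by 180° about x, y, z axes. -/
def gD2 : Fin 4 → Matrix (Fin 3) (Fin 3) ℝ
  | 0 => 1
  | 1 => !![1, 0, 0; 0, -1, 0; 0, 0, -1]
  | 2 => !![-1, 0, 0; 0, 1, 0; 0, 0, -1]
  | 3 => !![-1, 0, 0; 0, -1, 0; 0, 0, 1]

/-- Klein four-group multiplication on indices (XOR on two bits). -/
def kmul (a b : Fin 4) : Fin 4 := ⟨(a.val ^^^ b.val) % 4, Nat.mod_lt _ (by norm_num)⟩

lemma gD2_mul (a b : Fin 4) : gD2 a * gD2 b = gD2 (kmul a b) := by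
  fin_cases a <;> fin_cases b <;>
    simp [gD2, kmul, Matrix.mul_fin_three, Matrix.one_fin_three]

lemma gD2_eq_one_iff (x : Fin 4) : gD2 x = 1 ↔ x = 0 := by
  fin_cases x <;>
    simp [gD2, Matrix.one_fin_three, ← Matrix.ext_iff, funext_iff, Fin.forall_fin_succ] <;>
    norm_num

lemma kmul_eq_zero_iff (a b c : Fin 4) : kmul (kmul a b) c = 0 ↔ c = kmul a b := by
  revert a b c; decide

lemma so3_transpose_mul {A : Matrix (Fin 3) (Fin 3) ℝ}
    (h : A ∈ Matrix.specialOrthogonalGroup (Fin 3) ℝ) : Aᵀ * A = 1 := by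
  have := (Matrix.mem_specialOrthogonalGroup_iff.mp h).1
  rw [Matrix.mem_orthogonalGroup_iff'] at this
  simpa using this

lemma so3_mul_transpose {A : Matrix (Fin 3) (Fin 3) ℝ}
    (h : A ∈ Matrix.specialOrthogonalGroup (Fin 3) ℝ) : A * Aᵀ = 1 := by
  have := (Matrix.mem_specialOrthogonalGroup_iff.mp h).1
  rw [Matrix.mem_orthogonalGroup_iff] at this
  simpa using this

/-- For rotations `Rᵢ, Rⱼ, R_k ∈ SO(3)` and arbitrary permutations `τᵢⱼ, τⱼₖ, τₖᵢ ∈ S₄`,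
exactly 16 of the 64 triplets `(m,l,r)` satisfy
`(Rᵢᵀ g_{τᵢⱼ(m)} Rⱼ)(Rⱼᵀ g_{τⱼₖ(l)} R_k)(R_kᵀ g_{τₖᵢ(r)} Rᵢ) = I`. -/
theorem sixteen_triplets_eq_id
    (Ri Rj Rk : Matrix (Fin 3) (Fin 3) ℝ)
    (hRi : Ri ∈ Matrix.specialOrthogonalGroup (Fin 3) ℝ)
    (hRj : Rj ∈ Matrix.specialOrthogonalGroup (Fin 3) ℝ)
    (hRk : Rk ∈ Matrix.specialOrthogonalGroup (Fin 3) ℝ)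
    (τij τjk τki : Equiv.Perm (Fin 4)) :
    {p : Fin 4 × Fin 4 × Fin 4 |
      (Riᵀ * gD2 (τij p.1) * Rj) * (Rjᵀ * gD2 (τjk p.2.1) * Rk) *
        (Rkᵀ * gD2 (τki p.2.2) * Ri) = 1}.ncard = 16 := by
  have key : ∀ a b c : Fin 4,
      (Riᵀ * gD2 a * Rj) * (Rjᵀ * gD2 b * Rk) * (Rkᵀ * gD2 c * Ri) = 1 ↔
        kmul (kmul a b) c = 0 := by
    intro a b c
    have hprod : (Riᵀ * gD2 a * Rj) * (Rjᵀ * gD2 b * Rk) * (Rkᵀ * gD2 c * Ri)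
        = Riᵀ * gD2 (kmul (kmul a b) c) * Ri := by
      rw [← gD2_mul, ← gD2_mul]
      have h1 : Rj * Rjᵀ = 1 := so3_mul_transpose hRj
      have h2 : Rk * Rkᵀ = 1 := so3_mul_transpose hRk
      calc (Riᵀ * gD2 a * Rj) * (Rjᵀ * gD2 b * Rk) * (Rkᵀ * gD2 c * Ri)
          = Riᵀ * (gD2 a * ((Rj * Rjᵀ) * (gD2 b * ((Rk * Rkᵀ) * (gD2 c * Ri))))) := by
            noncomm_ring
        _ = Riᵀ * (gD2 a * gD2 b * gD2 c) * Ri := by rw [h1, h2]; noncomm_ring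
    rw [hprod, ← gD2_eq_one_iff]
    constructor
    · intro h
      have h1 : Ri * Riᵀ = 1 := so3_mul_transpose hRi
      calc gD2 (kmul (kmul a b) c)
          = (Ri * Riᵀ) * gD2 (kmul (kmul a b) c) * (Ri * Riᵀ) := by rw [h1]; simp
        _ = Ri * (Riᵀ * gD2 (kmul (kmul a b) c) * Ri) * Riᵀ := by noncomm_ring
        _ = Ri * 1 * Riᵀ := by rw [h]
        _ = 1 := by rw [mul_one, h1]
    · intro h
      rw [h]
      have h1 : Riᵀ * Ri = 1 := so3_transpose_mul hRi
      rw [mul_one, h1]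
  have hset : {p : Fin 4 × Fin 4 × Fin 4 |
      (Riᵀ * gD2 (τij p.1) * Rj) * (Rjᵀ * gD2 (τjk p.2.1) * Rk) *
        (Rkᵀ * gD2 (τki p.2.2) * Ri) = 1}
      = (fun q : Fin 4 × Fin 4 => (q.1, q.2, τki.symm (kmul (τij q.1) (τjk q.2)))) ''
          Set.univ := by
    ext ⟨m, l, r⟩
    simp only [Set.mem_setOf_eq, Set.image_univ, Set.mem_range, Prod.mk.injEq, Prod.exists]
    rw [key, kmul_eq_zero_iff]
    constructor
    · intro h
      exact ⟨m, l, rfl, rfl, by rw [Equiv.symm_apply_eq, h]⟩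
    · rintro ⟨m', l', rfl, rfl, rfl⟩
      simp
  rw [hset, Set.ncard_image_of_injective _ (fun q q' h => by
        obtain ⟨h1, h2, -⟩ := Prod.mk.injEq .. ▸ Prod.ext_iff.mp h
        exact Prod.ext h1 h2),
    Set.ncard_univ]
  simp
end

section
/- Let Ω be the 3·C(N,2) × 3·C(N,2) adjacency matrix of the graph on vertices v_{ij}^m (i < j ∈ [N], m ∈ {1,2,3}) with Ω(v_{ij}^m, v_{kl}^r) = 1 if |{i,j}∩{k,l}| = 1 and m = r, Ω(v_{ij}^m, v_{kl}^r) = -1 if |{i,j}∩{k,l}| = 1 and m ≠ r, and 0 otherwise. Then the largest eigenvalue of Ω is 4(N-2) and it has multiplicity exactly 2. -/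
open Matrix Module

/-- Index set of pairs `(i,j)` with `i < j` in `[N]`. -/
def PairIdx (N : ℕ) := {p : Fin N × Fin N // p.1 < p.2}

instance (N : ℕ) : Fintype (PairIdx N) := by unfold PairIdx; infer_instance
instance (N : ℕ) : DecidableEq (PairIdx N) := by unfold PairIdx; infer_instance

/-- The signed adjacency matrix `Ω` on vertices `v_{ij}^m` (`i<j ∈ [N]`, `m ∈ {1,2,3}`):
entry `+1` when the index pairs share exactly one index and the colors agree, `-1` when the
pairs share exactly one index and the colors differ, `0` otherwise. -/
def OmegaMat (N : ℕ) : Matrix (PairIdx N × Fin 3) (PairIdx N × Fin 3) ℝ :=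
  fun v w =>
    if (({v.1.val.1, v.1.val.2} : Finset (Fin N)) ∩ {w.1.val.1, w.1.val.2}).card = 1 then
      (if v.2 = w.2 then 1 else -1)
    else 0

/-!
`Ω` is the Kronecker product `A ⊗ₖ S` of the adjacency matrix `A` of the Johnson graph `J(N, 2)`,
which is connected and `d`-regular with `d = 2(N - 2)`, and the colour matrix `S = 2 • 1 - J` on
three colours. If `Ω x = μ x`, summing over the colours gives `A s = -μ s` for the colour sum `s`
(the columns of `S` sum to `-1`), and when `s = 0` every colour slice `y` satisfies
`A y = (μ / 2) y`. Adjacency eigenvalues of a `d`-regular graph lie in `[-d, d]` (Gershgorin), and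
for a connected graph the eigenvalue `d` has only constant eigenvectors (its Laplacian kernel).
Hence `μ ≤ 2d`, and the `2d`-eigenvectors are exactly `x (p, m) = c m` with `∑ m, c m = 0`.
-/

open Finset
open scoped Kronecker

namespace PairIdx

variable {N : ℕ}

def toFinset (p : PairIdx N) : Finset (Fin N) := {p.val.1, p.val.2}

lemma fst_ne_snd (p : PairIdx N) : p.val.1 ≠ p.val.2 := p.prop.ne

lemma fst_mem_toFinset (p : PairIdx N) : p.val.1 ∈ p.toFinset := mem_insert_self _ _

lemma card_toFinset (p : PairIdx N) : #p.toFinset = 2 := card_pair p.fst_ne_snd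

lemma toFinset_injective : Function.Injective (toFinset (N := N)) := by
  intro p q h
  have hp := p.prop
  have hq := q.prop
  have h1 : p.val.1 ∈ q.toFinset := h ▸ mem_insert_self _ _
  have h2 : p.val.2 ∈ q.toFinset := h ▸ mem_insert_of_mem (mem_singleton_self _)
  simp only [toFinset, mem_insert, mem_singleton] at h1 h2
  apply Subtype.ext
  ext <;> simp only [Fin.ext_iff, Fin.lt_def] at * <;> omega

def mk' (a b : Fin N) (h : a ≠ b) : PairIdx N :=
  if hab : a < b then ⟨(a, b), hab⟩ else ⟨(b, a), h.symm.lt_of_le (not_lt.mp hab)⟩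

lemma toFinset_mk' (a b : Fin N) (h : a ≠ b) : (mk' a b h).toFinset = {a, b} := by
  by_cases hab : a < b <;> simp [mk', hab, toFinset, pair_comm]

def other (q : PairIdx N) (a : Fin N) : Fin N := if q.val.1 = a then q.val.2 else q.val.1

lemma toFinset_eq_pair_other_and_ne {q : PairIdx N} {a : Fin N} (ha : a ∈ q.toFinset) :
    q.toFinset = {a, q.other a} ∧ q.other a ≠ a := by
  have := q.fst_ne_snd
  simp only [toFinset, mem_insert, mem_singleton] at ha
  unfold other toFinset
  rcases ha with rfl | rfl
  · simp [this.symm]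
  · simp [this, pair_comm]

lemma card_filter_mem_toFinset (a : Fin N) : #{q : PairIdx N | a ∈ q.toFinset} = N - 1 := by
  have : #((univ : Finset (Fin N)).erase a) = N - 1 := by simp
  rw [← this]
  refine card_bij (fun q _ => q.other a) (fun q hq => ?_) (fun q₁ hq₁ q₂ hq₂ h => ?_)
    (fun b hb => ?_)
  · simpa using (toFinset_eq_pair_other_and_ne (mem_filter.mp hq).2).2
  · apply toFinset_injective
    rw [(toFinset_eq_pair_other_and_ne (mem_filter.mp hq₁).2).1,
      (toFinset_eq_pair_other_and_ne (mem_filter.mp hq₂).2).1, h]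
  · have hab : a ≠ b := (ne_of_mem_erase hb).symm
    have ha : a ∈ (mk' a b hab).toFinset := by simp [toFinset_mk']
    refine ⟨mk' a b hab, mem_filter.mpr ⟨mem_univ _, ha⟩, ?_⟩
    obtain ⟨h, hne⟩ := toFinset_eq_pair_other_and_ne ha
    rw [toFinset_mk'] at h
    have : (mk' a b hab).other a ∈ ({a, b} : Finset (Fin N)) :=
      h ▸ mem_insert_of_mem (mem_singleton_self _)
    simpa [hne] using this

lemma sum_card_inter_toFinset (s : Finset (Fin N)) :
    ∑ q : PairIdx N, #(s ∩ q.toFinset) = #s * (N - 1) := by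
  have := sum_card_inter (B := univ.map ⟨toFinset, toFinset_injective⟩) (s := s)
    fun a _ => by rw [filter_map, card_map]; exact card_filter_mem_toFinset a
  simpa using this

end PairIdx

def johnsonGraph (N : ℕ) : SimpleGraph (PairIdx N) where
  Adj p q := #(p.toFinset ∩ q.toFinset) = 1
  symm := ⟨fun p q h => by rwa [inter_comm]⟩
  loopless := ⟨fun p h => by rw [inter_self, p.card_toFinset] at h; exact absurd h (by decide)⟩

namespace johnsonGraph
variable {N : ℕ}

instance : DecidableRel (johnsonGraph N).Adj :=
  fun p q => inferInstanceAs (Decidable (#(p.toFinset ∩ q.toFinset) = 1))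

lemma card_inter_toFinset (p q : PairIdx N) :
    #(p.toFinset ∩ q.toFinset) =
      (if (johnsonGraph N).Adj p q then 1 else 0) + if p = q then 2 else 0 := by
  by_cases hpq : p = q
  · subst hpq; simp [johnsonGraph, p.card_toFinset]
  have hle : #(p.toFinset ∩ q.toFinset) ≤ 2 := p.card_toFinset ▸ card_le_card inter_subset_left
  have hne : #(p.toFinset ∩ q.toFinset) ≠ 2 := fun h2 => hpq <| PairIdx.toFinset_injective <|
    ((eq_of_subset_of_card_le inter_subset_left (by rw [h2, p.card_toFinset])).symm.trans
      (eq_of_subset_of_card_le inter_subset_right (by rw [h2, q.card_toFinset])))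
  rw [if_neg hpq, add_zero]
  split_ifs with hadj
  · exact hadj
  · change ¬ _ = 1 at hadj
    omega

lemma isRegularOfDegree : (johnsonGraph N).IsRegularOfDegree (2 * (N - 2)) := by
  intro p
  have hN : 2 ≤ N := by have := p.val.2.isLt; have := p.prop; simp only [Fin.lt_def] at *; omega
  have h := PairIdx.sum_card_inter_toFinset p.toFinset
  simp only [card_inter_toFinset, sum_add_distrib, sum_boole, sum_ite_eq, mem_univ, if_true,
    p.card_toFinset, ← SimpleGraph.neighborFinset_eq_filter,
    SimpleGraph.card_neighborFinset_eq_degree, Nat.cast_id] at h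
  omega

lemma reachable_of_mem {p q : PairIdx N} {a : Fin N} (hp : a ∈ p.toFinset)
    (hq : a ∈ q.toFinset) :
    (johnsonGraph N).Reachable p q := by
  by_cases hpq : p = q
  · exact hpq ▸ SimpleGraph.Reachable.refl p
  refine SimpleGraph.Adj.reachable ?_
  have h := card_inter_toFinset p q
  have : 0 < #(p.toFinset ∩ q.toFinset) := card_pos.mpr ⟨a, mem_inter.mpr ⟨hp, hq⟩⟩
  simp only [hpq, if_false, add_zero] at h
  split_ifs at h with hadj
  · exact hadj
  · omega

lemma preconnected : (johnsonGraph N).Preconnected := by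
  intro p q
  by_cases h : p.val.1 = q.val.1
  · exact reachable_of_mem p.fst_mem_toFinset (h ▸ q.fst_mem_toFinset)
  · have hr := PairIdx.toFinset_mk' _ _ h
    exact (reachable_of_mem p.fst_mem_toFinset (hr ▸ mem_insert_self _ _)).trans
      (reachable_of_mem (hr ▸ mem_insert_of_mem (mem_singleton_self _)) q.fst_mem_toFinset)

end johnsonGraph

namespace SimpleGraph

variable {V : Type*} [Fintype V] [DecidableEq V] {G : SimpleGraph V} [DecidableRel G.Adj] {d : ℕ}

lemma IsRegularOfDegree.abs_le_of_adjMatrix_mulVec_eq (hG : G.IsRegularOfDegree d)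
    {u : V → ℝ} {μ : ℝ} (hu : u ≠ 0) (h : G.adjMatrix ℝ *ᵥ u = μ • u) : |μ| ≤ d := by
  have hμ : Module.End.HasEigenvalue (toLin' (G.adjMatrix ℝ)) μ :=
    Module.End.hasEigenvalue_of_hasEigenvector
      ⟨Module.End.mem_eigenspace_iff.mpr (by rwa [toLin'_apply]), hu⟩
  obtain ⟨k, hk⟩ := eigenvalue_mem_ball hμ
  have hrow : ∑ j ∈ univ.erase k, ‖G.adjMatrix ℝ k j‖ = d := by
    rw [sum_erase _ (by simp), ← hG k]
    simp [adjMatrix_apply, apply_ite, sum_boole, ← card_neighborFinset_eq_degree,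
      neighborFinset_eq_filter]
  rw [hrow] at hk
  simpa [Metric.mem_closedBall, Real.dist_eq] using hk

lemma IsRegularOfDegree.eq_of_adjMatrix_mulVec_eq (hG : G.IsRegularOfDegree d)
    (hconn : G.Preconnected) {u : V → ℝ} (h : G.adjMatrix ℝ *ᵥ u = (d : ℝ) • u) (i j : V) :
    u i = u j := by
  have hL : G.lapMatrix ℝ *ᵥ u = 0 := by
    ext v
    simp [lapMatrix, sub_mulVec, degMatrix_mulVec_apply, hG v, h]
  exact (lapMatrix_mulVec_eq_zero_iff_forall_reachable G).mp hL i j (hconn i j)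

end SimpleGraph

def signMatrix : Matrix (Fin 3) (Fin 3) ℝ := of fun m r => if m = r then 1 else -1

lemma omegaMat_eq_kronecker (N : ℕ) :
    OmegaMat N = (johnsonGraph N).adjMatrix ℝ ⊗ₖ signMatrix := by
  ext ⟨p, m⟩ ⟨q, r⟩
  change (if (johnsonGraph N).Adj p q then _ else _) = _
  by_cases hpq : (johnsonGraph N).Adj p q <;> simp [hpq, signMatrix]

def colorSum {V : Type*} (x : V × Fin 3 → ℝ) : V → ℝ := fun p => ∑ m, x (p, m)

section Kronecker

variable {V : Type*} [Fintype V]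

lemma kronecker_signMatrix_mulVec_apply (A : Matrix V V ℝ) (x : V × Fin 3 → ℝ) (p : V)
    (m : Fin 3) :
    (A ⊗ₖ signMatrix *ᵥ x) (p, m) = 2 * (A *ᵥ fun q => x (q, m)) p - (A *ᵥ colorSum x) p := by
  simp only [mulVec, dotProduct, Fintype.sum_prod_type, kroneckerMap_apply, colorSum, mul_sum,
    ← sum_sub_distrib]
  refine sum_congr rfl fun q _ => ?_
  fin_cases m <;> simp [signMatrix, Fin.sum_univ_three] <;> ring

variable {A : Matrix V V ℝ} {x : V × Fin 3 → ℝ} {μ : ℝ}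

lemma mulVec_colorSum_of_kronecker_mulVec_eq (h : A ⊗ₖ signMatrix *ᵥ x = μ • x) :
    A *ᵥ colorSum x = (-μ) • colorSum x := by
  have hsum : colorSum x = (fun q => x (q, 0)) + (fun q => x (q, 1)) + fun q => x (q, 2) := by
    ext; simp [colorSum, Fin.sum_univ_three]
  ext p
  have h₀ := congrFun h (p, 0)
  have h₁ := congrFun h (p, 1)
  have h₂ := congrFun h (p, 2)
  simp only [kronecker_signMatrix_mulVec_apply, Pi.smul_apply, smul_eq_mul] at h₀ h₁ h₂ ⊢
  rw [hsum] at h₀ h₁ h₂ ⊢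
  simp only [mulVec_add, Pi.add_apply] at h₀ h₁ h₂ ⊢
  linarith

lemma mulVec_slice_of_kronecker_mulVec_eq (h : A ⊗ₖ signMatrix *ᵥ x = μ • x)
    (hs : colorSum x = 0) (m : Fin 3) :
    A *ᵥ (fun q => x (q, m)) = (μ / 2) • fun q => x (q, m) := by
  ext p
  have hp := congrFun h (p, m)
  rw [kronecker_signMatrix_mulVec_apply, hs, mulVec_zero] at hp
  simp only [Pi.zero_apply, sub_zero, Pi.smul_apply, smul_eq_mul] at hp ⊢
  linarith

end Kronecker

section RegularKronecker

open SimpleGraph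

variable {V : Type*} [Fintype V] [DecidableEq V] {G : SimpleGraph V} [DecidableRel G.Adj]
  {d : ℕ} {x : V × Fin 3 → ℝ} {μ : ℝ}

theorem le_of_kronecker_signMatrix_mulVec_eq (hG : G.IsRegularOfDegree d) (hx : x ≠ 0)
    (h : G.adjMatrix ℝ ⊗ₖ signMatrix *ᵥ x = μ • x) : μ ≤ 2 * d := by
  by_cases hs : colorSum x = 0
  · obtain ⟨m, hm⟩ : ∃ m, (fun q => x (q, m)) ≠ 0 := by
      by_contra! h0
      exact hx (funext fun v => congrFun (h0 v.2) v.1)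
    have := hG.abs_le_of_adjMatrix_mulVec_eq hm (mulVec_slice_of_kronecker_mulVec_eq h hs m)
    linarith [le_abs_self (μ / 2)]
  · have := hG.abs_le_of_adjMatrix_mulVec_eq hs (mulVec_colorSum_of_kronecker_mulVec_eq h)
    linarith [neg_le_abs (-μ), (Nat.cast_nonneg d : (0 : ℝ) ≤ d)]

lemma colorSum_eq_zero_of_kronecker_mulVec_eq (hG : G.IsRegularOfDegree d) (hd : 0 < d)
    (h : G.adjMatrix ℝ ⊗ₖ signMatrix *ᵥ x = (2 * d : ℝ) • x) : colorSum x = 0 := by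
  by_contra hs
  have := hG.abs_le_of_adjMatrix_mulVec_eq hs (mulVec_colorSum_of_kronecker_mulVec_eq h)
  have hd' : (0 : ℝ) < d := Nat.cast_pos.mpr hd
  rw [abs_neg, abs_of_pos (by positivity)] at this
  linarith

theorem eigenspace_kronecker_signMatrix (hG : G.IsRegularOfDegree d) (hconn : G.Preconnected)
    (hd : 0 < d) [Nonempty V] :
    Module.End.eigenspace (toLin' (G.adjMatrix ℝ ⊗ₖ signMatrix)) (2 * d) =
      (LinearMap.ker (∑ m : Fin 3, LinearMap.proj m)).map (LinearMap.funLeft ℝ ℝ Prod.snd) := by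
  ext x
  rw [Module.End.mem_eigenspace_iff, toLin'_apply]
  constructor
  · intro h
    have hs := colorSum_eq_zero_of_kronecker_mulVec_eq hG hd h
    obtain ⟨p₀⟩ := ‹Nonempty V›
    refine ⟨fun m => x (p₀, m), ?_, ?_⟩
    · simpa [colorSum] using congrFun hs p₀
    · ext ⟨p, m⟩
      have hm := mulVec_slice_of_kronecker_mulVec_eq h hs m
      rw [mul_div_cancel_left₀ _ two_ne_zero] at hm
      exact hG.eq_of_adjMatrix_mulVec_eq hconn hm p₀ p
  · rintro ⟨c, hc, rfl⟩
    have hc : ∑ m, c m = 0 := by simpa using hc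
    have hs : colorSum (LinearMap.funLeft ℝ ℝ Prod.snd c : V × Fin 3 → ℝ) = 0 := by
      ext; simpa [colorSum] using hc
    ext ⟨p, m⟩
    rw [kronecker_signMatrix_mulVec_apply, hs, mulVec_zero]
    have := adjMatrix_mulVec_const_apply_of_regular (α := ℝ) (a := c m) hG (v := p)
    simp only [LinearMap.funLeft_apply, Pi.zero_apply, sub_zero, Pi.smul_apply, smul_eq_mul]
    rw [show (fun q : V => c m) = Function.const V (c m) from rfl, this]
    ring

theorem finrank_eigenspace_kronecker_signMatrix (hG : G.IsRegularOfDegree d)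
    (hconn : G.Preconnected) (hd : 0 < d) [Nonempty V] :
    finrank ℝ (Module.End.eigenspace (toLin' (G.adjMatrix ℝ ⊗ₖ signMatrix)) (2 * d)) = 2 := by
  rw [eigenspace_kronecker_signMatrix hG hconn hd, ← (Submodule.equivMapOfInjective _
    (LinearMap.funLeft_injective_of_surjective ℝ ℝ _ Prod.snd_surjective) _).finrank_eq]
  have hsum : (∑ m : Fin 3, LinearMap.proj m : (Fin 3 → ℝ) →ₗ[ℝ] ℝ) ≠ 0 := fun h0 => by
    simpa using LinearMap.congr_fun h0 1
  have := Module.Dual.finrank_ker_add_one_of_ne_zero hsum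
  simp only [finrank_fin_fun] at this
  omega

end RegularKronecker

/-- The largest eigenvalue of `Ω` is `4(N-2)`, and it has multiplicity exactly 2. -/
theorem omegaMat_top_eigenvalue (N : ℕ) (hN : 5 ≤ N) :
    finrank ℝ (Module.End.eigenspace (Matrix.toLin' (OmegaMat N))
        ((4 : ℝ) * ((N : ℝ) - 2))) = 2 ∧
    (∀ μ : ℝ, Module.End.eigenspace (Matrix.toLin' (OmegaMat N)) μ ≠ ⊥ →
      μ ≤ 4 * ((N : ℝ) - 2)) := by
  have hG := johnsonGraph.isRegularOfDegree (N := N)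
  have hd : 0 < 2 * (N - 2) := by omega
  have htop : (4 : ℝ) * ((N : ℝ) - 2) = 2 * ((2 * (N - 2) : ℕ) : ℝ) := by
    rw [Nat.cast_mul, Nat.cast_sub (by omega)]
    push_cast
    ring
  have : Nonempty (PairIdx N) := ⟨⟨(⟨0, by omega⟩, ⟨1, by omega⟩), Fin.mk_lt_mk.mpr one_pos⟩⟩
  rw [omegaMat_eq_kronecker, htop]
  refine ⟨finrank_eigenspace_kronecker_signMatrix hG johnsonGraph.preconnected hd, fun μ hμ => ?_⟩
  obtain ⟨x, hx, hx0⟩ := (Submodule.ne_bot_iff _).mp hμ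
  rw [Module.End.mem_eigenspace_iff, toLin'_apply] at hx
  exact le_of_kronecker_signMatrix_mulVec_eq hG hx0 hx
end

section
/- Let v_1, ..., v_N be unit row vectors in R³ and s_{ij} ∈ {-1,1} for i < j ∈ [N], with s_{ji} := s_{ij} and s_{ii} := 1. Let H be the 3N × 3N block matrix whose (i,j) block equals s_{ij} v_i^T v_j. Then H has rank 1 if and only if s_{in} s_{nj} = s_{ij} for all i, j, n ∈ [N]; and when this holds, H = (v_n^s)^T v_n^s where v_n^s = (s_{n1} v_1, ..., s_{nN} v_N) for every n ∈ [N]. -/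
open Matrix

/-- If a matrix has rank ≤ 1, all its 2×2 minors vanish. -/
lemma minor_eq_of_rank_le_one {m n : Type*} [Fintype m] [Fintype n] [DecidableEq n]
    (A : Matrix m n ℝ) (h : A.rank ≤ 1) (i k : m) (j l : n) :
    A i j * A k l = A i l * A k j := by
  set p := LinearMap.range A.mulVecLin with hp
  have hj : Aᵀ j ∈ p := ⟨Pi.single j 1, mulVec_single_one A j⟩
  have hl : Aᵀ l ∈ p := ⟨Pi.single l 1, mulVec_single_one A l⟩
  have hdep : ¬ LinearIndependent ℝ ![(⟨Aᵀ j, hj⟩ : p), (⟨Aᵀ l, hl⟩ : p)] := by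
    intro hind
    have h2 := hind.fintype_card_le_finrank
    have hr : A.rank = Module.finrank ℝ p := rfl
    rw [← hr] at h2
    simp at h2
    omega
  rw [LinearIndependent.pair_iff] at hdep
  push_neg at hdep
  obtain ⟨a, b, hab, hne⟩ := hdep
  have e1 : a * A i j + b * A i l = 0 := by
    have := congrArg (fun z : p => (z : m → ℝ) i) hab
    simpa using this
  have e2 : a * A k j + b * A k l = 0 := by
    have := congrArg (fun z : p => (z : m → ℝ) k) hab
    simpa using this
  rcases (show a ≠ 0 ∨ b ≠ 0 by tauto) with ha | hb
  · apply mul_left_cancel₀ ha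
    linear_combination A k l * e1 - A i l * e2
  · apply mul_left_cancel₀ hb
    linear_combination A i j * e2 - A k j * e1

/-- Let `v₁,…,v_N` be unit row vectors in `ℝ³` and `s_{ij} ∈ {-1,1}` symmetric with
`s_{ii} = 1`. The block matrix `H` with blocks `s_{ij} vᵢᵀ vⱼ` has rank 1 iff
`s_{in} s_{nj} = s_{ij}` for all `i,n,j`; and in that case `H = (vₙ^s)ᵀ vₙ^s` with
`vₙ^s = (s_{n1} v₁, …, s_{nN} v_N)` for every `n`. -/
theorem rank_one_iff_signs_cycle {N : ℕ} (hN : 1 ≤ N)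
    (v : Fin N → Fin 3 → ℝ) (hunit : ∀ i, v i ⬝ᵥ v i = 1)
    (s : Fin N → Fin N → ℝ) (hsval : ∀ i j, s i j = 1 ∨ s i j = -1)
    (hsymm : ∀ i j, s j i = s i j) (hdiag : ∀ i, s i i = 1) :
    letI H : Matrix (Fin N × Fin 3) (Fin N × Fin 3) ℝ :=
      fun x y => s x.1 y.1 * v x.1 x.2 * v y.1 y.2
    (H.rank = 1 ↔ ∀ i n j, s i n * s n j = s i j) ∧
    ((∀ i n j, s i n * s n j = s i j) → ∀ n : Fin N,
      H = Matrix.vecMulVec (fun x : Fin N × Fin 3 => s n x.1 * v x.1 x.2)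
            (fun x : Fin N × Fin 3 => s n x.1 * v x.1 x.2)) := by
  set H : Matrix (Fin N × Fin 3) (Fin N × Fin 3) ℝ :=
      fun x y => s x.1 y.1 * v x.1 x.2 * v y.1 y.2 with hHdef
  have hvne : ∀ i : Fin N, ∃ a, v i a ≠ 0 := by
    intro i
    by_contra hc
    push_neg at hc
    have := hunit i
    simp [dotProduct, hc] at this
  have hs2 : ∀ i j, s i j * s i j = 1 := by
    intro i j; rcases hsval i j with h | h <;> rw [h] <;> norm_num
  have hfac : (∀ i n j, s i n * s n j = s i j) → ∀ n : Fin N,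
      H = Matrix.vecMulVec (fun x : Fin N × Fin 3 => s n x.1 * v x.1 x.2)
            (fun x : Fin N × Fin 3 => s n x.1 * v x.1 x.2) := by
    intro hcyc n
    ext x y
    rw [vecMulVec_apply, hHdef]
    have h1 := hcyc x.1 n y.1
    rw [← hsymm x.1 n] at h1
    dsimp only
    linear_combination v x.1 x.2 * v y.1 y.2 * h1.symm
  refine ⟨⟨fun hrank i n j => ?_, fun hcyc => ?_⟩, hfac⟩
  · have hle : H.rank ≤ 1 := hrank.le
    obtain ⟨a, ha⟩ := hvne i
    obtain ⟨b, hb⟩ := hvne j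
    obtain ⟨c, hc⟩ := hvne n
    have key := minor_eq_of_rank_le_one H hle (i, a) (n, c) (j, b) (n, c)
    simp only [hHdef] at key
    have hx : v i a * v j b * (v n c * v n c) ≠ 0 :=
      mul_ne_zero (mul_ne_zero ha hb) (mul_ne_zero hc hc)
    apply mul_right_cancel₀ hx
    linear_combination -key + s i j * v i a * v j b * v n c * v n c * hdiag n
  · set n0 : Fin N := ⟨0, hN⟩ with hn0
    set w : Fin N × Fin 3 → ℝ := fun x => s n0 x.1 * v x.1 x.2 with hw
    have hH : H = vecMulVec w w := hfac hcyc n0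
    have hmv : ∀ x : Fin N × Fin 3 → ℝ, H.mulVec x = (w ⬝ᵥ x) • w := by
      intro x
      rw [hH]
      ext i
      simp only [mulVec, dotProduct, vecMulVec_apply, Pi.smul_apply, smul_eq_mul,
        Finset.sum_mul]
      exact Finset.sum_congr rfl fun j _ => by ring
    have hww : w ⬝ᵥ w = (N : ℝ) := by
      rw [dotProduct, Fintype.sum_prod_type]
      have hk : ∀ k : Fin N, ∑ b : Fin 3, w (k, b) * w (k, b) = 1 := by
        intro k
        have hu := hunit k
        rw [dotProduct] at hu
        calc ∑ b : Fin 3, w (k, b) * w (k, b)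
            = (s n0 k * s n0 k) * ∑ b : Fin 3, v k b * v k b := by
              rw [Finset.mul_sum]
              exact Finset.sum_congr rfl fun b _ => by rw [hw]; ring
          _ = 1 := by rw [hu, hs2]; ring
      rw [Finset.sum_congr rfl fun k _ => hk k]
      simp
    have hNne : (N : ℝ) ≠ 0 := Nat.cast_ne_zero.mpr (by omega)
    have hwne : w ≠ 0 := by
      intro h0
      rw [h0] at hww
      simp [dotProduct] at hww
      exact hNne hww.symm
    have hrange : LinearMap.range H.mulVecLin = Submodule.span ℝ {w} := by
      apply le_antisymm
      · rintro _ ⟨x, rfl⟩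
        rw [mulVecLin_apply, hmv]
        exact Submodule.smul_mem _ _ (Submodule.mem_span_singleton_self w)
      · rw [Submodule.span_le, Set.singleton_subset_iff]
        refine ⟨(N : ℝ)⁻¹ • w, ?_⟩
        rw [mulVecLin_apply, hmv, dotProduct_smul, hww, smul_eq_mul,
          inv_mul_cancel₀ hNne, one_smul]
    have hr : H.rank = Module.finrank ℝ (LinearMap.range H.mulVecLin) := rfl
    rw [hr, hrange, finrank_span_singleton hwne]
end

section
/- Let u_{3c} = (α, 0, -α)^T and u_{2c} = (β, -2β, β)^T with α, β > 0, and let W = {(x,y,z)^T : x+y+z = 0}. Suppose u = P_σ u_{3c} and v = P_σ u_{2c} for some permutation matrix P_σ, and suppose u', v' ∈ R³ satisfy (u' v') = (u v) R(θ) for a 2×2 rotation R(θ), with u' a permutation of u_{3c} and v' a permutation of u_{2c}. Then there exists a permutation matrix P'_σ such that (u v) R(θ) = P'_σ (±u, v), i.e., u' = ±P'_σ u and v' = P'_σ v. -/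
/-!
It suffices to look at `v' = -sin θ • u + cos θ • v`. At the coordinate where `u` vanishes, `v` is
`-2β`, so `v'` there is `-2β cos θ ∈ {β, -2β}`: either `cos θ = 1`, and the rotation is trivial, or
`cos θ = -1/2`. In the second case the coordinate where `u = α` and `v = β` gives
`sin θ · α = ±3β/2`, and then `sin² θ = 3/4` yields `sin θ · β = ±α/2`. With these values the
rotation by a third of a turn moves the coordinates of `u` and of `v` by the same 3-cycle.
-/

open Equiv

namespace Unmix

variable {α β c s : ℝ}

lemma apply_of_eq_u2c_comp {f : Fin 3 → ℝ} {ρ : Perm (Fin 3)} (h : f = ![β, -2 * β, β] ∘ ρ)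
    (k : Fin 3) : f k = β ∨ f k = -2 * β := by
  rw [h, Function.comp_apply]
  generalize ρ k = j
  fin_cases j <;> simp

lemma rotation_third_turn_eq_comp_perm (hc : c = -1 / 2) (hs : s ^ 2 = 3 / 4)
    (hsα : s * α = 3 / 2 * β ∨ s * α = -(3 / 2 * β)) :
    ∃ π : Perm (Fin 3), c • ![α, 0, -α] + s • ![β, -2 * β, β] = ![α, 0, -α] ∘ π ∧
      (-s) • ![α, 0, -α] + c • ![β, -2 * β, β] = ![β, -2 * β, β] ∘ π := by
  rcases hsα with hsα | hsα
  · have hsβ : s * β = α / 2 := by linear_combination (2 / 3 * α) * hs - (2 / 3 * s) * hsα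
    refine ⟨finRotate 3, ?_, ?_⟩ <;> funext i <;> fin_cases i <;> simp [hc] <;> linarith
  · have hsβ : s * β = -(α / 2) := by linear_combination (2 / 3 * s) * hsα - (2 / 3 * α) * hs
    refine ⟨(finRotate 3).symm, ?_, ?_⟩ <;> funext i <;> fin_cases i <;> simp [hc] <;> linarith

lemma rotation_eq_comp_perm_of_eq_u2c_comp (hβ : β ≠ 0) (hcs : c ^ 2 + s ^ 2 = 1)
    (hv : ∃ ρ : Perm (Fin 3), (-s) • ![α, 0, -α] + c • ![β, -2 * β, β] = ![β, -2 * β, β] ∘ ρ) :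
    ∃ π : Perm (Fin 3), c • ![α, 0, -α] + s • ![β, -2 * β, β] = ![α, 0, -α] ∘ π ∧
      (-s) • ![α, 0, -α] + c • ![β, -2 * β, β] = ![β, -2 * β, β] ∘ π := by
  obtain ⟨ρ, hρ⟩ := hv
  have hv₀ : -(s * α) + c * β = β ∨ -(s * α) + c * β = -2 * β := by
    simpa using apply_of_eq_u2c_comp hρ 0
  have hv₁ : -(c * (2 * β)) = β ∨ -(c * (2 * β)) = -2 * β := by
    simpa using apply_of_eq_u2c_comp hρ 1
  have hc : c = -1 / 2 ∨ c = 1 := hv₁.imp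
    (fun h => mul_right_cancel₀ hβ (by linarith)) (fun h => mul_right_cancel₀ hβ (by linarith))
  rcases hc with hc | hc
  · subst hc
    exact rotation_third_turn_eq_comp_perm rfl (by linarith) <|
      hv₀.symm.imp (fun h => by linarith) (fun h => by linarith)
  · have hs : s = 0 := by nlinarith
    exact ⟨1, by simp [hc, hs], by simp [hc, hs]⟩

end Unmix

open Unmix in
theorem unmix_lemma_general (α β : ℝ) (hβ : 0 < β)
    (σ : Equiv.Perm (Fin 3)) (θ : ℝ)
    (u v u' v' : Fin 3 → ℝ)
    (hu : u = fun i => ![α, 0, -α] (σ i))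
    (hv : v = fun i => ![β, -2 * β, β] (σ i))
    (hu' : u' = Real.cos θ • u + Real.sin θ • v)
    (hv' : v' = (-Real.sin θ) • u + Real.cos θ • v)
    (hv'perm : ∃ ρ : Equiv.Perm (Fin 3), v' = fun i => ![β, -2 * β, β] (ρ i)) :
    ∃ (π : Equiv.Perm (Fin 3)) (ε : ℝ), (ε = 1 ∨ ε = -1) ∧
      (u' = fun i => ε * u (π i)) ∧ (v' = fun i => v (π i)) := by
  subst hu hv hu' hv'
  obtain ⟨ρ, hρ⟩ := hv'perm
  obtain ⟨π, hπu, hπv⟩ := rotation_eq_comp_perm_of_eq_u2c_comp (α := α) hβ.ne'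
    (Real.cos_sq_add_sin_sq θ) ⟨ρ * σ⁻¹, funext fun i => by
      simpa only [Pi.add_apply, Pi.smul_apply, Function.comp_apply, Perm.mul_apply, Perm.coe_inv,
        apply_symm_apply] using congrFun hρ (σ⁻¹ i)⟩
  refine ⟨σ⁻¹ * π * σ, 1, Or.inl rfl, funext fun i => ?_, funext fun i => ?_⟩
  · simpa only [Pi.add_apply, Pi.smul_apply, Function.comp_apply, Perm.mul_apply, Perm.coe_inv,
      apply_symm_apply, one_mul] using congrFun hπu (σ i)
  · simpa only [Pi.add_apply, Pi.smul_apply, Function.comp_apply, Perm.mul_apply, Perm.coe_inv,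
      apply_symm_apply] using congrFun hπv (σ i)

/-- Let `u_{3c} = (α,0,-α)ᵀ`, `u_{2c} = (β,-2β,β)ᵀ` with `α, β > 0`. Suppose
`u = P_σ u_{3c}`, `v = P_σ u_{2c}` for some permutation `σ`, and `(u' v') = (u v) R(θ)`
for a 2×2 rotation `R(θ)`, where `u'` is a permutation of `u_{3c}` and `v'` a permutation of
`u_{2c}`. Then there is a permutation `π` and a sign `ε ∈ {-1,1}` with
`u' = ε (u ∘ π)` and `v' = v ∘ π` (i.e. `(u v) R(θ) = P'_σ (±u, v)`). -/
theorem unmix_lemma (α β : ℝ) (hα : 0 < α) (hβ : 0 < β)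
    (σ : Equiv.Perm (Fin 3)) (θ : ℝ)
    (u v u' v' : Fin 3 → ℝ)
    (hu : u = fun i => ![α, 0, -α] (σ i))
    (hv : v = fun i => ![β, -2 * β, β] (σ i))
    (hu' : u' = Real.cos θ • u + Real.sin θ • v)
    (hv' : v' = (-Real.sin θ) • u + Real.cos θ • v)
    (hu'perm : ∃ τ : Equiv.Perm (Fin 3), u' = fun i => ![α, 0, -α] (τ i))
    (hv'perm : ∃ ρ : Equiv.Perm (Fin 3), v' = fun i => ![β, -2 * β, β] (ρ i)) :
    ∃ (π : Equiv.Perm (Fin 3)) (ε : ℝ), (ε = 1 ∨ ε = -1) ∧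
      (u' = fun i => ε * u (π i)) ∧ (v' = fun i => v (π i)) :=
  unmix_lemma_general α β hβ σ θ u v u' v' hu hv hu' hv' hv'perm
end
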